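/- Let U be an optional process with regulated trajectories that is right lower-semicontinuous along stopping times, let (δ^n) be a nonincreasing sequence of stopping times with limit δ, and let Z be an integrable random variable with Z ≥ limsup_n U_{δ^n} 1_{[δ^n < T]} and Z measurable. If additionally δ^n > δ on {δ < T} for all n along a subsequence, then E[Z 1_{[δ < T]}] ≥ E[U_{δ+} 1_{[δ < T]}] ≥ E[U_δ 1_{[δ < T]}]. -/

import Mathlib

open MeasureTheory Filter Topology Set Function

/-- `y : [0,T] → ℝ` is regulated. -/
def Regulated (T : ℝ) (y : ℝ → ℝ) : Prop :=
  (∀ t ∈ Set.Ico (0:ℝ) T, ∃ l : ℝ, Tendsto y (𝓝[>] t) (𝓝 l)) ∧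
  (∀ t ∈ Set.Ioc (0:ℝ) T, ∃ l : ℝ, Tendsto y (𝓝[<] t) (𝓝 l))

/-! Along `{δ < T}` the times `δⁿ` decrease strictly to `δ`, so `U_{δⁿ} → U_{δ+}` since the paths
are regulated. Hence `U_{δ+}` is both the liminf in the right lower-semicontinuity inequality and
the limsup dominated by `Z`; integrating `U_δ ≤ U_{δ+} ≤ Z` over `{δ < T}` gives the result. -/

theorem tendsto_rightLim_of_tendsto_nhdsGT {α β ι : Type*} [LinearOrder α] [TopologicalSpace α]
    [OrderTopology α] [TopologicalSpace β] [T2Space β] {f : α → β} {a : α} {b : β}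
    [(𝓝[>] a).NeBot] (hf : Tendsto f (𝓝[>] a) (𝓝 b)) {l : Filter ι} {s : ι → α}
    (hs : Tendsto s l (𝓝 a)) (hgt : ∀ᶠ i in l, a < s i) :
    Tendsto (fun i => f (s i)) l (𝓝 (rightLim f a)) := by
  rw [rightLim_eq_of_tendsto hf]
  exact hf.comp (tendsto_nhdsWithin_of_tendsto_nhds_of_eventually_within s hs hgt)

section RightLimitAlongSequence

variable {y : ℝ → ℝ} {t : ℝ} {s : ℕ → ℝ}

theorem le_rightLim_of_le_liminf (hy : ∃ l, Tendsto y (𝓝[>] t) (𝓝 l))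
    (hs : Tendsto s atTop (𝓝 t)) (hgt : ∀ n, t < s n)
    (hlsc : y t ≤ liminf (fun n => y (s n)) atTop) :
    y t ≤ rightLim y t := by
  obtain ⟨l, hl⟩ := hy
  exact hlsc.trans_eq (tendsto_rightLim_of_tendsto_nhdsGT hl hs (.of_forall hgt)).liminf_eq

theorem rightLim_le_of_limsup_ite_le {T z : ℝ} (hy : ∃ l, Tendsto y (𝓝[>] t) (𝓝 l))
    (hs : Tendsto s atTop (𝓝 t)) (hgt : ∀ n, t < s n) (htT : t < T)
    (hz : limsup (fun n => if s n < T then y (s n) else 0) atTop ≤ z) :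
    rightLim y t ≤ z := by
  obtain ⟨l, hl⟩ := hy
  have hlim := tendsto_rightLim_of_tendsto_nhdsGT hl hs (.of_forall hgt)
  have hite : Tendsto (fun n => if s n < T then y (s n) else 0) atTop (𝓝 (rightLim y t)) :=
    hlim.congr' ((hs.eventually_lt_const htT).mono fun n hn => (if_pos hn).symm)
  exact hite.limsup_eq ▸ hz

end RightLimitAlongSequence

theorem rlsc_limit_inequality_general {Ω : Type*} {m0 : MeasurableSpace Ω}
    (ℱ : Filtration ℝ m0) (μ : Measure Ω)
    (T : ℝ) (U : ℝ → Ω → ℝ)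
    (hUreg : ∀ ω, Regulated T fun t => U t ω)
    (hrlsc : ∀ τ : Ω → ℝ, IsStoppingTime ℱ (fun ω => (τ ω : WithTop ℝ)) → (∀ ω, τ ω ∈ Set.Icc (0:ℝ) T) →
      ∀ τs : ℕ → Ω → ℝ, (∀ n, IsStoppingTime ℱ (fun ω => (τs n ω : WithTop ℝ))) →
        (∀ n ω, τs n ω ∈ Set.Icc (0:ℝ) T) →
        (∀ ω, Antitone fun n => τs n ω) →
        (∀ ω, Tendsto (fun n => τs n ω) atTop (𝓝 (τ ω))) →
        ∀ᵐ ω ∂μ, U (τ ω) ω ≤ liminf (fun n => U (τs n ω) ω) atTop)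
    (δn : ℕ → Ω → ℝ) (δ : Ω → ℝ)
    (hδnstop : ∀ n, IsStoppingTime ℱ (fun ω => (δn n ω : WithTop ℝ))) (hδstop : IsStoppingTime ℱ (fun ω => (δ ω : WithTop ℝ)))
    (hδnmem : ∀ n ω, δn n ω ∈ Set.Icc (0:ℝ) T) (hδmem : ∀ ω, δ ω ∈ Set.Icc (0:ℝ) T)
    (hanti : ∀ ω, Antitone fun n => δn n ω)
    (hconv : ∀ ω, Tendsto (fun n => δn n ω) atTop (𝓝 (δ ω)))
    (Z : Ω → ℝ) (hZint : Integrable Z μ)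
    (hZ : ∀ᵐ ω ∂μ,
      limsup (fun n => if δn n ω < T then U (δn n ω) ω else 0) atTop ≤ Z ω)
    (hsub : ∃ φ : ℕ → ℕ, StrictMono φ ∧ ∀ (n : ℕ) ω, δ ω < T → δ ω < δn (φ n) ω)
    (hint1 : Integrable (fun ω => rightLim (fun t => U t ω) (δ ω)) μ)
    (hint2 : Integrable (fun ω => U (δ ω) ω) μ) :
    (∫ ω in {ω | δ ω < T}, rightLim (fun t => U t ω) (δ ω) ∂μ)
        ≤ (∫ ω in {ω | δ ω < T}, Z ω ∂μ) ∧
      (∫ ω in {ω | δ ω < T}, U (δ ω) ω ∂μ)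
        ≤ ∫ ω in {ω | δ ω < T}, rightLim (fun t => U t ω) (δ ω) ∂μ := by
  obtain ⟨φ, hφ, hφδ⟩ := hsub
  have hδn_gt : ∀ ω, δ ω < T → ∀ n, δ ω < δn n ω := fun ω hω n =>
    (hφδ n ω hω).trans_le (hanti ω hφ.le_apply)
  have hδT : MeasurableSet {ω | δ ω < T} := by
    simpa using hδstop.measurableSpace_le _ (hδstop.measurableSet_lt' T)
  have hchain : ∀ᵐ ω ∂μ, δ ω < T →
      U (δ ω) ω ≤ rightLim (fun t => U t ω) (δ ω) ∧ rightLim (fun t => U t ω) (δ ω) ≤ Z ω := by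
    filter_upwards [hrlsc δ hδstop hδmem δn hδnstop hδnmem hanti hconv, hZ] with ω hlsc hZω hω
    have hright := (hUreg ω).1 (δ ω) ⟨(hδmem ω).1, hω⟩
    exact ⟨le_rightLim_of_le_liminf hright (hconv ω) (hδn_gt ω hω) hlsc,
      rightLim_le_of_limsup_ite_le hright (hconv ω) (hδn_gt ω hω) hω hZω⟩
  refine ⟨setIntegral_mono_ae_restrict hint1.integrableOn hZint.integrableOn ?_,
    setIntegral_mono_ae_restrict hint2.integrableOn hint1.integrableOn ?_⟩
  · exact (ae_restrict_iff' hδT).2 (hchain.mono fun ω h hω => (h hω).2)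
  · exact (ae_restrict_iff' hδT).2 (hchain.mono fun ω h hω => (h hω).1)

/-- If `U` is right lower-semicontinuous along stopping times, `δ^n ↓ δ` are
stopping times (with `δ^n > δ` on `{δ < T}` along a subsequence) and `Z` is integrable with
`Z ≥ limsup_n U_{δ^n} 1_{[δ^n < T]}` a.s., then
`E[Z 1_{[δ<T]}] ≥ E[U_{δ+} 1_{[δ<T]}] ≥ E[U_δ 1_{[δ<T]}]`. -/
theorem rlsc_limit_inequality {Ω : Type*} {m0 : MeasurableSpace Ω}
    (ℱ : Filtration ℝ m0) (μ : Measure Ω) [IsProbabilityMeasure μ]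
    (T : ℝ) (hT : 0 < T) (U : ℝ → Ω → ℝ)
    (hUreg : ∀ ω, Regulated T fun t => U t ω)
    (hrlsc : ∀ τ : Ω → ℝ, IsStoppingTime ℱ (fun ω => (τ ω : WithTop ℝ)) → (∀ ω, τ ω ∈ Set.Icc (0:ℝ) T) →
      ∀ τs : ℕ → Ω → ℝ, (∀ n, IsStoppingTime ℱ (fun ω => (τs n ω : WithTop ℝ))) →
        (∀ n ω, τs n ω ∈ Set.Icc (0:ℝ) T) →
        (∀ ω, Antitone fun n => τs n ω) →
        (∀ ω, Tendsto (fun n => τs n ω) atTop (𝓝 (τ ω))) →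
        ∀ᵐ ω ∂μ, U (τ ω) ω ≤ liminf (fun n => U (τs n ω) ω) atTop)
    (δn : ℕ → Ω → ℝ) (δ : Ω → ℝ)
    (hδnstop : ∀ n, IsStoppingTime ℱ (fun ω => (δn n ω : WithTop ℝ))) (hδstop : IsStoppingTime ℱ (fun ω => (δ ω : WithTop ℝ)))
    (hδnmem : ∀ n ω, δn n ω ∈ Set.Icc (0:ℝ) T) (hδmem : ∀ ω, δ ω ∈ Set.Icc (0:ℝ) T)
    (hanti : ∀ ω, Antitone fun n => δn n ω)
    (hconv : ∀ ω, Tendsto (fun n => δn n ω) atTop (𝓝 (δ ω)))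
    (Z : Ω → ℝ) (hZint : Integrable Z μ)
    (hZ : ∀ᵐ ω ∂μ,
      limsup (fun n => if δn n ω < T then U (δn n ω) ω else 0) atTop ≤ Z ω)
    (hsub : ∃ φ : ℕ → ℕ, StrictMono φ ∧ ∀ (n : ℕ) ω, δ ω < T → δ ω < δn (φ n) ω)
    (hint1 : Integrable (fun ω => rightLim (fun t => U t ω) (δ ω)) μ)
    (hint2 : Integrable (fun ω => U (δ ω) ω) μ) :
    (∫ ω in {ω | δ ω < T}, rightLim (fun t => U t ω) (δ ω) ∂μ)
        ≤ (∫ ω in {ω | δ ω < T}, Z ω ∂μ) ∧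
      (∫ ω in {ω | δ ω < T}, U (δ ω) ω ∂μ)
        ≤ ∫ ω in {ω | δ ω < T}, rightLim (fun t => U t ω) (δ ω) ∂μ :=
  rlsc_limit_inequality_general ℱ μ T U hUreg hrlsc δn δ hδnstop hδstop hδnmem hδmem hanti hconv Z
    hZint hZ hsub hint1 hint2
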